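/- arXiv:2507.17858 — 3 statements merged into one kernel-verified Lean document; each statement's English description precedes it below -/
import Mathlib

section
/- Let ν be a measure on (0,∞) with ∫ min(y, y²) ν(dy) < ∞. Suppose there are α ∈ (0,1], a constant C > 0, x₀ ∈ (0,1), and a function ℓ : (0,∞) → (0,∞) that is measurable, slowly varying at 0, and bounded above and away from 0 on every compact subinterval of (0,∞), such that ∫_{(0,∞)} (e^{−x·y} − 1 + x·y) ν(dy) ≤ C · x^{1+α} · ℓ(x) for all x ∈ (0, x₀]. Then for every δ ∈ (0,α), ∫_{(1,∞)} y^{1+δ} ν(dy) < ∞. -/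
open Real Set Filter MeasureTheory Topology

/-!
Since `e^{-t} - 1 + t ≥ t / 2` for `t ≥ 2`, the hypothesis bounds the tail `∫_{y ≥ 2/x} y ν(dy)`
by `2 C x^α ℓ(x)`. Along `x_n = 2^{-n} x₀` the ratios `ℓ(x_{n+1}) / ℓ(x_n)` tend to `1`, so
`∑ 2^{n(δ-α)} ℓ(x_n)` converges by the ratio test. On the dyadic shell
`[2^n · 2/x₀, 2^{n+1} · 2/x₀)` one has `y^{1+δ} ≤ (2^{n+1} · 2/x₀)^δ y`, so the shells contribute a
convergent series; on `(1, 2/x₀]` the integrand is a bounded multiple of `min(y, y²)`.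
-/

lemma half_le_exp_neg_sub_one_add {t : ℝ} (ht : 2 ≤ t) : t / 2 ≤ exp (-t) - 1 + t := by
  linarith [exp_pos (-t)]

lemma rpow_one_add_le_rpow_mul {y b δ : ℝ} (hy : 0 ≤ y) (hyb : y ≤ b) (hδ : 0 ≤ δ) :
    y ^ (1 + δ) ≤ b ^ δ * y := by
  rw [rpow_add' hy (by linarith), rpow_one, mul_comm]
  gcongr

lemma summable_pow_mul_of_tendsto_ratio_one {s : ℕ → ℝ} (hs : ∀ n, s n ≠ 0)
    (hratio : Tendsto (fun n => s (n + 1) / s n) atTop (𝓝 1)) {q : ℝ} (hq : |q| < 1) :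
    Summable fun n => q ^ n * s n := by
  rcases eq_or_ne q 0 with rfl | hq0
  · exact (hasSum_single 0 fun n hn => by simp [zero_pow hn]).summable
  refine summable_of_ratio_test_tendsto_lt_one hq
    (Eventually.of_forall fun n => mul_ne_zero (pow_ne_zero n hq0) (hs n)) ?_
  have h := hratio.abs.const_mul |q|
  rw [abs_one, mul_one] at h
  refine h.congr fun n => ?_
  simp only [norm_mul, norm_pow, Real.norm_eq_abs, abs_div, pow_succ]
  field_simp [hq0, hs n]

lemma tendsto_ratio_geometric_of_tendsto_ratio {ℓ : ℝ → ℝ} {c x₀ : ℝ} (hc0 : 0 < c) (hc1 : c < 1)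
    (hx₀ : 0 < x₀) (hℓ : Tendsto (fun x => ℓ (c * x) / ℓ x) (𝓝[>] 0) (𝓝 1)) :
    Tendsto (fun n : ℕ => ℓ (c ^ (n + 1) * x₀) / ℓ (c ^ n * x₀)) atTop (𝓝 1) := by
  have hseq : Tendsto (fun n : ℕ => c ^ n * x₀) atTop (𝓝[>] 0) := by
    refine tendsto_nhdsWithin_of_tendsto_nhds_of_eventually_within _ ?_
      (Eventually.of_forall fun n => mem_Ioi.2 (by positivity))
    simpa using (tendsto_pow_atTop_nhds_zero_of_lt_one hc0.le hc1).mul_const x₀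
  refine (hℓ.comp hseq).congr fun n => ?_
  rw [Function.comp_apply, pow_succ', mul_assoc]

lemma setLIntegral_Ici_two_div_le (μ : Measure ℝ) {x : ℝ} (hx : 0 < x) :
    ∫⁻ y in Ici (2 / x), ENNReal.ofReal y ∂μ ≤
      ENNReal.ofReal (2 / x) * ∫⁻ y in Ioi 0, ENNReal.ofReal (exp (-(x * y)) - 1 + x * y) ∂μ := by
  rw [← lintegral_const_mul' _ _ ENNReal.ofReal_ne_top]
  calc ∫⁻ y in Ici (2 / x), ENNReal.ofReal y ∂μ
      ≤ ∫⁻ y in Ici (2 / x),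
          ENNReal.ofReal (2 / x) * ENNReal.ofReal (exp (-(x * y)) - 1 + x * y) ∂μ := by
        refine setLIntegral_mono (by fun_prop) fun y hy => ?_
        rw [← ENNReal.ofReal_mul (by positivity)]
        refine ENNReal.ofReal_le_ofReal ?_
        have hxy : 2 ≤ x * y := by rwa [mem_Ici, div_le_iff₀' hx] at hy
        calc y = 2 / x * (x * y / 2) := by field_simp
          _ ≤ 2 / x * (exp (-(x * y)) - 1 + x * y) := by
            gcongr; exact half_le_exp_neg_sub_one_add hxy
    _ ≤ _ := lintegral_mono_set (Ici_subset_Ioi.2 (by positivity))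

lemma setLIntegral_Ici_two_div_le_of_laplace_le (μ : Measure ℝ) {x C α L : ℝ} (hx : 0 < x)
    (h : ∫⁻ y in Ioi 0, ENNReal.ofReal (exp (-(x * y)) - 1 + x * y) ∂μ
      ≤ ENNReal.ofReal (C * x ^ (1 + α) * L)) :
    ∫⁻ y in Ici (2 / x), ENNReal.ofReal y ∂μ ≤ ENNReal.ofReal (2 * C * x ^ α * L) := by
  calc ∫⁻ y in Ici (2 / x), ENNReal.ofReal y ∂μ
      ≤ ENNReal.ofReal (2 / x) * ENNReal.ofReal (C * x ^ (1 + α) * L) :=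
        (setLIntegral_Ici_two_div_le μ hx).trans (by gcongr)
    _ = ENNReal.ofReal (2 * C * x ^ α * L) := by
        rw [← ENNReal.ofReal_mul (by positivity), rpow_add hx, rpow_one]
        field_simp

lemma Ici_subset_iUnion_Ico_mul_two_pow {a : ℝ} (ha : 0 < a) :
    Ici a ⊆ ⋃ n : ℕ, Ico (a * 2 ^ n) (a * 2 ^ (n + 1)) := by
  intro y hy
  obtain ⟨n, hn, hn'⟩ := exists_nat_pow_near ((one_le_div ha).2 hy) one_lt_two
  exact mem_iUnion.2 ⟨n, by rwa [le_div_iff₀' ha] at hn, by rwa [div_lt_iff₀' ha] at hn'⟩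

lemma setLIntegral_Ici_rpow_one_add_lt_top {μ : Measure ℝ} {a δ : ℝ} (ha : 0 < a) (hδ : 0 ≤ δ)
    {g : ℕ → ENNReal} (htail : ∀ n : ℕ, ∫⁻ y in Ici (a * 2 ^ n), ENNReal.ofReal y ∂μ ≤ g n)
    (hsum : ∑' n, ENNReal.ofReal (2 ^ δ) ^ n * g n ≠ ⊤) :
    ∫⁻ y in Ici a, ENNReal.ofReal (y ^ (1 + δ)) ∂μ < ⊤ := by
  have hshell : ∀ n : ℕ,
      ∫⁻ y in Ico (a * 2 ^ n) (a * 2 ^ (n + 1)), ENNReal.ofReal (y ^ (1 + δ)) ∂μ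
        ≤ ENNReal.ofReal ((2 * a) ^ δ) * (ENNReal.ofReal (2 ^ δ) ^ n * g n) := by
    intro n
    have hscale : ENNReal.ofReal ((a * 2 ^ (n + 1)) ^ δ)
        = ENNReal.ofReal ((2 * a) ^ δ) * ENNReal.ofReal (2 ^ δ) ^ n := by
      rw [show a * 2 ^ (n + 1) = 2 * a * 2 ^ n by ring, mul_rpow (by positivity) (by positivity),
        ← rpow_pow_comm zero_le_two, ENNReal.ofReal_mul (by positivity),
        ENNReal.ofReal_pow (by positivity)]
    calc ∫⁻ y in Ico (a * 2 ^ n) (a * 2 ^ (n + 1)), ENNReal.ofReal (y ^ (1 + δ)) ∂μ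
        ≤ ∫⁻ y in Ico (a * 2 ^ n) (a * 2 ^ (n + 1)),
            ENNReal.ofReal ((a * 2 ^ (n + 1)) ^ δ) * ENNReal.ofReal y ∂μ := by
          refine setLIntegral_mono (by fun_prop) fun y hy => ?_
          have hy0 : 0 ≤ y := (by positivity : 0 ≤ a * 2 ^ n).trans hy.1
          rw [← ENNReal.ofReal_mul (by positivity)]
          exact ENNReal.ofReal_le_ofReal (rpow_one_add_le_rpow_mul hy0 hy.2.le hδ)
      _ = ENNReal.ofReal ((a * 2 ^ (n + 1)) ^ δ) *
            ∫⁻ y in Ico (a * 2 ^ n) (a * 2 ^ (n + 1)), ENNReal.ofReal y ∂μ :=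
          lintegral_const_mul _ (by fun_prop)
      _ ≤ ENNReal.ofReal ((a * 2 ^ (n + 1)) ^ δ) * g n := by
          gcongr
          exact (lintegral_mono_set Ico_subset_Ici_self).trans (htail n)
      _ = _ := by rw [hscale, mul_assoc]
  calc ∫⁻ y in Ici a, ENNReal.ofReal (y ^ (1 + δ)) ∂μ
      ≤ ∫⁻ y in ⋃ n : ℕ, Ico (a * 2 ^ n) (a * 2 ^ (n + 1)), ENNReal.ofReal (y ^ (1 + δ)) ∂μ :=
        lintegral_mono_set (Ici_subset_iUnion_Ico_mul_two_pow ha)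
    _ ≤ ∑' n : ℕ, ∫⁻ y in Ico (a * 2 ^ n) (a * 2 ^ (n + 1)), ENNReal.ofReal (y ^ (1 + δ)) ∂μ :=
        lintegral_iUnion_le _ _
    _ ≤ ∑' n : ℕ, ENNReal.ofReal ((2 * a) ^ δ) * (ENNReal.ofReal (2 ^ δ) ^ n * g n) :=
        ENNReal.tsum_le_tsum hshell
    _ = ENNReal.ofReal ((2 * a) ^ δ) * ∑' n : ℕ, ENNReal.ofReal (2 ^ δ) ^ n * g n :=
        ENNReal.tsum_mul_left
    _ < ⊤ := ENNReal.mul_lt_top ENNReal.ofReal_lt_top hsum.lt_top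

lemma setLIntegral_Ioc_one_rpow_one_add_lt_top {μ : Measure ℝ} {a δ : ℝ} (hδ : 0 ≤ δ)
    (hμ : ∫⁻ y in Ioi 0, ENNReal.ofReal (min y (y ^ 2)) ∂μ < ⊤) :
    ∫⁻ y in Ioc 1 a, ENNReal.ofReal (y ^ (1 + δ)) ∂μ < ⊤ := by
  calc ∫⁻ y in Ioc 1 a, ENNReal.ofReal (y ^ (1 + δ)) ∂μ
      ≤ ∫⁻ y in Ioc 1 a, ENNReal.ofReal (a ^ δ) * ENNReal.ofReal (min y (y ^ 2)) ∂μ := by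
        refine setLIntegral_mono (by fun_prop) fun y hy => ?_
        have ha : 0 ≤ a := by linarith [hy.1, hy.2]
        rw [← ENNReal.ofReal_mul (by positivity), min_eq_left (by nlinarith [hy.1])]
        exact ENNReal.ofReal_le_ofReal (rpow_one_add_le_rpow_mul (by linarith [hy.1]) hy.2 hδ)
    _ = ENNReal.ofReal (a ^ δ) * ∫⁻ y in Ioc 1 a, ENNReal.ofReal (min y (y ^ 2)) ∂μ :=
        lintegral_const_mul _ (by fun_prop)
    _ ≤ ENNReal.ofReal (a ^ δ) * ∫⁻ y in Ioi 0, ENNReal.ofReal (min y (y ^ 2)) ∂μ := by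
        gcongr
        exact Ioc_subset_Ioi_self.trans (Ioi_subset_Ioi zero_le_one)
    _ < ⊤ := ENNReal.mul_lt_top ENNReal.ofReal_lt_top hμ

lemma setLIntegral_Ioi_one_rpow_one_add_lt_top {μ : Measure ℝ} {a δ : ℝ} (hδ : 0 ≤ δ)
    (hμ : ∫⁻ y in Ioi 0, ENNReal.ofReal (min y (y ^ 2)) ∂μ < ⊤)
    (htail : ∫⁻ y in Ici a, ENNReal.ofReal (y ^ (1 + δ)) ∂μ < ⊤) :
    ∫⁻ y in Ioi 1, ENNReal.ofReal (y ^ (1 + δ)) ∂μ < ⊤ := by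
  have hsplit : Ioi 1 ⊆ Ioc 1 a ∪ Ici a := fun y hy =>
    (le_or_gt y a).imp (fun h => ⟨hy, h⟩) le_of_lt
  calc ∫⁻ y in Ioi 1, ENNReal.ofReal (y ^ (1 + δ)) ∂μ
      ≤ ∫⁻ y in Ioc 1 a ∪ Ici a, ENNReal.ofReal (y ^ (1 + δ)) ∂μ := lintegral_mono_set hsplit
    _ ≤ (∫⁻ y in Ioc 1 a, ENNReal.ofReal (y ^ (1 + δ)) ∂μ)
          + ∫⁻ y in Ici a, ENNReal.ofReal (y ^ (1 + δ)) ∂μ := lintegral_union_le _ _ _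
    _ < ⊤ := ENNReal.add_lt_top.2 ⟨setLIntegral_Ioc_one_rpow_one_add_lt_top hδ hμ, htail⟩

theorem stmt_11_general (ν : Measure ℝ)
    (hν_min : (∫⁻ y in Ioi (0 : ℝ), ENNReal.ofReal (min y (y ^ 2)) ∂ν) < ⊤)
    (α : ℝ) (C : ℝ) (hC : 0 < C)
    (x₀ : ℝ) (hx₀0 : 0 < x₀)
    (ℓ : ℝ → ℝ) (hℓ_pos : ∀ x > 0, 0 < ℓ x)
    (hℓ_sv : ∀ c > 0, Tendsto (fun x => ℓ (c * x) / ℓ x) (nhdsWithin 0 (Ioi 0)) (nhds 1))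
    (hbound : ∀ x ∈ Ioc (0 : ℝ) x₀,
      (∫⁻ y in Ioi (0 : ℝ), ENNReal.ofReal (exp (-(x * y)) - 1 + x * y) ∂ν)
        ≤ ENNReal.ofReal (C * x ^ (1 + α) * ℓ x)) :
    ∀ δ : ℝ, 0 < δ → δ < α →
      (∫⁻ y in Ioi (1 : ℝ), ENNReal.ofReal (y ^ (1 + δ)) ∂ν) < ⊤ := by
  intro δ hδ0 hδα
  set x : ℕ → ℝ := fun n => 2⁻¹ ^ n * x₀ with hx
  have hx_pos (n : ℕ) : 0 < x n := by positivity
  have hx_mem (n : ℕ) : x n ∈ Ioc 0 x₀ :=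
    ⟨hx_pos n, mul_le_of_le_one_left hx₀0.le (pow_le_one₀ (by norm_num) (by norm_num))⟩
  have htail (n : ℕ) : ∫⁻ y in Ici (2 / x₀ * 2 ^ n), ENNReal.ofReal y ∂ν
      ≤ ENNReal.ofReal (2 * C * x n ^ α * ℓ (x n)) := by
    rw [show 2 / x₀ * 2 ^ n = 2 / x n by simp only [hx, inv_pow]; field_simp]
    exact setLIntegral_Ici_two_div_le_of_laplace_le ν (hx_pos n) (hbound _ (hx_mem n))
  have hterm (n : ℕ) : ENNReal.ofReal (2 ^ δ) ^ n * ENNReal.ofReal (2 * C * x n ^ α * ℓ (x n))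
      = ENNReal.ofReal (2 * C * x₀ ^ α * ((2 ^ δ / 2 ^ α) ^ n * ℓ (x n))) := by
    rw [← ENNReal.ofReal_pow (by positivity), ← ENNReal.ofReal_mul (by positivity)]
    congr 1
    rw [hx, mul_rpow (by positivity) hx₀0.le, ← rpow_pow_comm (by norm_num), inv_rpow zero_le_two,
      div_pow, inv_pow]
    field_simp
  have hratio_lt_one : |2 ^ δ / 2 ^ α| < (1 : ℝ) := by
    rw [abs_of_pos (by positivity), div_lt_one (by positivity)]
    exact rpow_lt_rpow_of_exponent_lt one_lt_two hδα
  have hsummable : Summable fun n => (2 ^ δ / 2 ^ α) ^ n * ℓ (x n) :=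
    summable_pow_mul_of_tendsto_ratio_one (fun n => (hℓ_pos _ (hx_pos n)).ne')
      (tendsto_ratio_geometric_of_tendsto_ratio (by norm_num) (by norm_num) hx₀0
        (hℓ_sv _ (by norm_num))) hratio_lt_one
  have hsum : ∑' n, ENNReal.ofReal (2 ^ δ) ^ n * ENNReal.ofReal (2 * C * x n ^ α * ℓ (x n)) ≠ ⊤ := by
    rw [tsum_congr hterm, ← ENNReal.ofReal_tsum_of_nonneg
      (fun n => by have := hℓ_pos _ (hx_pos n); positivity)
      (hsummable.mul_left _)]
    exact ENNReal.ofReal_ne_top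
  exact setLIntegral_Ioi_one_rpow_one_add_lt_top hδ0.le hν_min
    (setLIntegral_Ici_rpow_one_add_lt_top (by positivity) hδ0.le htail hsum)

/-- If `ν` is a measure on `(0,∞)` with `∫ min(y,y²) ν(dy) < ∞` and
`∫ (e^{−xy} − 1 + xy) ν(dy) ≤ C x^{1+α} ℓ(x)` for small `x > 0`, where `ℓ` is
slowly varying at `0`, then `∫_{(1,∞)} y^{1+δ} ν(dy) < ∞` for every `δ ∈ (0,α)`. -/
theorem stmt_11 (ν : Measure ℝ)
    (hν_min : (∫⁻ y in Ioi (0 : ℝ), ENNReal.ofReal (min y (y ^ 2)) ∂ν) < ⊤)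
    (α : ℝ) (hα0 : 0 < α) (hα1 : α ≤ 1) (C : ℝ) (hC : 0 < C)
    (x₀ : ℝ) (hx₀0 : 0 < x₀) (hx₀1 : x₀ < 1)
    (ℓ : ℝ → ℝ) (hℓ_pos : ∀ x > 0, 0 < ℓ x) (hℓ_meas : Measurable ℓ)
    (hℓ_sv : ∀ c > 0, Tendsto (fun x => ℓ (c * x) / ℓ x) (nhdsWithin 0 (Ioi 0)) (nhds 1))
    (hℓ_bdd : ∀ a b : ℝ, 0 < a → a ≤ b →
      ∃ m M : ℝ, 0 < m ∧ ∀ x ∈ Icc a b, m ≤ ℓ x ∧ ℓ x ≤ M)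
    (hbound : ∀ x ∈ Ioc (0 : ℝ) x₀,
      (∫⁻ y in Ioi (0 : ℝ), ENNReal.ofReal (exp (-(x * y)) - 1 + x * y) ∂ν)
        ≤ ENNReal.ofReal (C * x ^ (1 + α) * ℓ x)) :
    ∀ δ : ℝ, 0 < δ → δ < α →
      (∫⁻ y in Ioi (1 : ℝ), ENNReal.ofReal (y ^ (1 + δ)) ∂ν) < ⊤ :=
  stmt_11_general ν hν_min α C hC x₀ hx₀0 ℓ hℓ_pos hℓ_sv hbound
end

section
/- Let ν be a measure on (0,∞) with ∫ min(y, y²) ν(dy) < ∞. Suppose there are α ∈ (0,1], a constant C > 0, x₀ ∈ (0,1), and a function ℓ : (0,∞) → (0,∞) such that ∫_{(0,∞)} (e^{−x·y} − 1 + x·y) ν(dy) ≤ C · x^{1+α} · ℓ(x) for all x ∈ (0, x₀]. Then there exist a constant C′ > 0 and y₀ ≥ 1 such that for all y ≥ y₀: ∫_{[y,∞)} u ν(du) ≤ C′ · y^{−α} · ℓ(1/y), and consequently ν([y,∞)) ≤ C′ · y^{−1−α} · ℓ(1/y). -/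
open Real Set Filter MeasureTheory

lemma key_ineq (z : ℝ) (hz : 1 ≤ z) :
    Real.exp (-2) / 2 * z ≤ Real.exp (-z) - 1 + z := by
  rcases le_total z 2 with h | h
  · have h1 : Real.exp (-2) ≤ Real.exp (-z) := Real.exp_le_exp.mpr (by linarith)
    nlinarith [Real.exp_pos (-2)]
  · have h1 : (0:ℝ) < Real.exp (-z) := Real.exp_pos _
    have h2 : Real.exp (-2) ≤ 1 := by
      have := Real.exp_le_exp.mpr (show (-2:ℝ) ≤ 0 by norm_num)
      simpa using this
    nlinarith

/-- Tail estimate: if `∫ (e^{−xy} − 1 + xy) ν(dy) ≤ C x^{1+α} ℓ(x)` for small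
`x > 0`, then for large `y`, `∫_{[y,∞)} u ν(du) ≤ C′ y^{−α} ℓ(1/y)` and hence
`ν([y,∞)) ≤ C′ y^{−1−α} ℓ(1/y)`. -/
theorem stmt_12 (ν : Measure ℝ)
    (hν_min : (∫⁻ y in Ioi (0 : ℝ), ENNReal.ofReal (min y (y ^ 2)) ∂ν) < ⊤)
    (α : ℝ) (hα0 : 0 < α) (hα1 : α ≤ 1) (C : ℝ) (hC : 0 < C)
    (x₀ : ℝ) (hx₀0 : 0 < x₀) (hx₀1 : x₀ < 1)
    (ℓ : ℝ → ℝ) (hℓ_pos : ∀ x > 0, 0 < ℓ x)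
    (hbound : ∀ x ∈ Ioc (0 : ℝ) x₀,
      (∫⁻ y in Ioi (0 : ℝ), ENNReal.ofReal (exp (-(x * y)) - 1 + x * y) ∂ν)
        ≤ ENNReal.ofReal (C * x ^ (1 + α) * ℓ x)) :
    ∃ C' > (0 : ℝ), ∃ y₀ ≥ (1 : ℝ), ∀ y ≥ y₀,
      (∫⁻ u in Ici y, ENNReal.ofReal u ∂ν) ≤ ENNReal.ofReal (C' * y ^ (-α) * ℓ (1 / y)) ∧
        ν (Ici y) ≤ ENNReal.ofReal (C' * y ^ (-1 - α) * ℓ (1 / y)) := by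
  set c : ℝ := Real.exp (-2) / 2 with hc_def
  have hc : 0 < c := by positivity
  refine ⟨C / c, by positivity, max 1 (1 / x₀), le_max_left _ _, ?_⟩
  intro y hy
  have hy1 : (1 : ℝ) ≤ y := le_trans (le_max_left _ _) hy
  have hy0 : (0 : ℝ) < y := by linarith
  set x : ℝ := 1 / y with hx_def
  have hx0 : 0 < x := by positivity
  have hxx₀ : x ≤ x₀ := by
    rw [hx_def, div_le_iff₀ hy0]
    have : 1 / x₀ ≤ y := le_trans (le_max_right _ _) hy
    rw [div_le_iff₀ hx₀0] at this
    linarith [this]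
  have hxy : x * y = 1 := by
    rw [hx_def]; field_simp
  have hℓx : 0 < ℓ x := hℓ_pos x hx0
  -- pointwise bound on Ici y
  have hpt : ∀ u ∈ Ici y, ENNReal.ofReal (c * x * u)
      ≤ ENNReal.ofReal (exp (-(x * u)) - 1 + x * u) := by
    intro u hu
    have hu' : y ≤ u := hu
    have hzu : 1 ≤ x * u := by
      calc (1:ℝ) = x * y := hxy.symm
      _ ≤ x * u := by nlinarith
    have := key_ineq (x * u) hzu
    exact ENNReal.ofReal_le_ofReal (by rw [mul_assoc]; exact this)
  -- main inequality with the constant multiple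
  have hmeas : Measurable fun u : ℝ => ENNReal.ofReal u := measurable_id.ennreal_ofReal
  have h2 : ENNReal.ofReal (c * x) * ∫⁻ u in Ici y, ENNReal.ofReal u ∂ν
      = ∫⁻ u in Ici y, ENNReal.ofReal (c * x * u) ∂ν := by
    rw [← lintegral_const_mul _ hmeas]
    congr 1
    ext u
    rw [← ENNReal.ofReal_mul (by positivity : (0:ℝ) ≤ c * x)]
  have h3 : (∫⁻ u in Ici y, ENNReal.ofReal (c * x * u) ∂ν)
      ≤ ENNReal.ofReal (C * x ^ (1 + α) * ℓ x) := by
    calc (∫⁻ u in Ici y, ENNReal.ofReal (c * x * u) ∂ν)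
        ≤ ∫⁻ u in Ici y, ENNReal.ofReal (exp (-(x * u)) - 1 + x * u) ∂ν :=
          setLIntegral_mono (by fun_prop) hpt
      _ ≤ ∫⁻ u in Ioi (0:ℝ), ENNReal.ofReal (exp (-(x * u)) - 1 + x * u) ∂ν :=
          lintegral_mono_set (fun u hu => lt_of_lt_of_le hy0 hu)
      _ ≤ ENNReal.ofReal (C * x ^ (1 + α) * ℓ x) := hbound x ⟨hx0, hxx₀⟩
  -- the algebraic identity
  have halg : C * x ^ (1 + α) * ℓ x = (c * x) * (C / c * y ^ (-α) * ℓ (1 / y)) := by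
    have e1 : x ^ (1 + α) = y⁻¹ * y ^ (-α) := by
      rw [hx_def, one_div, Real.inv_rpow hy0.le, ← Real.rpow_neg hy0.le, neg_add,
        Real.rpow_add hy0, Real.rpow_neg_one]
    rw [e1, hx_def]
    field_simp
  have hmain : (∫⁻ u in Ici y, ENNReal.ofReal u ∂ν)
      ≤ ENNReal.ofReal (C / c * y ^ (-α) * ℓ (1 / y)) := by
    have h4 : ENNReal.ofReal (c * x) * (∫⁻ u in Ici y, ENNReal.ofReal u ∂ν)
        ≤ ENNReal.ofReal (c * x) * ENNReal.ofReal (C / c * y ^ (-α) * ℓ (1 / y)) := by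
      rw [h2, ← ENNReal.ofReal_mul (by positivity), ← halg]
      exact h3
    exact (ENNReal.mul_le_mul_iff_right (by simp [ENNReal.ofReal_eq_zero]; positivity)
      ENNReal.ofReal_ne_top).mp h4
  refine ⟨hmain, ?_⟩
  -- Markov step
  have hmarkov : ν (Ici y) ≤ ENNReal.ofReal y⁻¹ * ∫⁻ u in Ici y, ENNReal.ofReal u ∂ν := by
    have : ν (Ici y) = ∫⁻ _ in Ici y, 1 ∂ν := by simp
    rw [this, ← lintegral_const_mul _ hmeas]
    refine setLIntegral_mono (by fun_prop) ?_
    intro u hu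
    have hu' : y ≤ u := hu
    have h1u : (1:ℝ) ≤ y⁻¹ * u := by
      have h := (one_le_div hy0).mpr hu'
      rw [div_eq_mul_inv, mul_comm] at h
      exact h
    calc (1 : ENNReal) = ENNReal.ofReal 1 := by simp
      _ ≤ ENNReal.ofReal (y⁻¹ * u) := ENNReal.ofReal_le_ofReal h1u
      _ = ENNReal.ofReal y⁻¹ * ENNReal.ofReal u := ENNReal.ofReal_mul (by positivity)
  calc ν (Ici y) ≤ ENNReal.ofReal y⁻¹ * ∫⁻ u in Ici y, ENNReal.ofReal u ∂ν := hmarkov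
    _ ≤ ENNReal.ofReal y⁻¹ * ENNReal.ofReal (C / c * y ^ (-α) * ℓ (1 / y)) :=
        mul_le_mul_right hmain _
    _ = ENNReal.ofReal (C / c * y ^ (-1 - α) * ℓ (1 / y)) := by
        rw [← ENNReal.ofReal_mul (by positivity)]
        congr 1
        have : y ^ (-1 - α) = y⁻¹ * y ^ (-α) := by
          rw [show -1 - α = -1 + -α by ring, Real.rpow_add hy0, Real.rpow_neg_one]
        rw [this]; ring
end

section
/- Let (p_n)_{n≥0} be a probability distribution on the natural numbers with finite mean m = ∑_{n≥0} n·p_n < ∞. Suppose there are α ∈ (0,1] and a function ℓ̄ : (0,1] → (0,∞), measurable and slowly varying at 0, such that for all z ∈ [0,1): ∑_{n≥0} p_n · z^n = 1 − (1−z)·m + (1−z)^{1+α} · ℓ̄(1−z). Then for every δ ∈ (0,α), ∑_{n≥0} n^{1+δ} · p_n < ∞. -/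
open Real Set Filter Topology

/-!
Put `z = 1 - x`. Since `∑ p_n = 1` and `∑ n p_n = m`, the generating-function identity says
`∑ p_n ((1 - x)^n - 1 + n x) = x^(1+α) ℓ̄(x)`. Every term on the left is nonnegative by
Bernoulli's inequality, and is at least `x n p_n / 2` once `n x ≥ 2`. Hence on the dyadic block
`2^(j+1) ≤ n < 2^(j+2)` we get `∑ n p_n ≤ 2 · 2^(-jα) ℓ̄(2^(-j))`, and since `n^δ ≤ 4^δ 2^(jδ)`
there, the block of `∑ n^(1+δ) p_n` is at most a constant times `2^(j(δ-α)) ℓ̄(2^(-j))`.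
Slow variation gives `ℓ̄(2^(-j-1)) / ℓ̄(2^(-j)) → 1`, so these bounds are summable by the
ratio test.
-/

def dyadicBlock (j : ℕ) : Finset ℕ := Finset.Ico (2 ^ j) (2 ^ (j + 1))

theorem mem_dyadicBlock {j n : ℕ} : n ∈ dyadicBlock j ↔ 2 ^ j ≤ n ∧ n < 2 ^ (j + 1) :=
  Finset.mem_Ico

theorem sum_range_two_pow_eq_add_sum_dyadicBlock {M : Type*} [AddCommMonoid M] (f : ℕ → M)
    (K : ℕ) : ∑ n ∈ Finset.range (2 ^ K), f n =
      f 0 + ∑ j ∈ Finset.range K, ∑ n ∈ dyadicBlock j, f n := by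
  induction K with
  | zero => simp
  | succ K ih =>
    rw [← Finset.sum_range_add_sum_Ico _ (Nat.pow_le_pow_right two_pos K.le_succ), ih,
      Finset.sum_range_succ, add_assoc, dyadicBlock]

theorem summable_of_summable_sum_dyadicBlock {f : ℕ → ℝ} (hf : ∀ n, 0 ≤ f n)
    (h : Summable fun j => ∑ n ∈ dyadicBlock j, f n) : Summable f := by
  refine summable_of_sum_range_le (c := f 0 + ∑' j, ∑ n ∈ dyadicBlock j, f n) hf fun K => ?_
  calc ∑ n ∈ Finset.range K, f n ≤ ∑ n ∈ Finset.range (2 ^ K), f n :=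
        Finset.sum_le_sum_of_subset_of_nonneg
          (Finset.range_subset_range.mpr Nat.lt_two_pow_self.le) fun n _ _ => hf n
    _ = f 0 + ∑ j ∈ Finset.range K, ∑ n ∈ dyadicBlock j, f n :=
        sum_range_two_pow_eq_add_sum_dyadicBlock f K
    _ ≤ f 0 + ∑' j, ∑ n ∈ dyadicBlock j, f n := by
        gcongr
        exact h.sum_le_tsum _ fun j _ => Finset.sum_nonneg fun n _ => hf n

theorem sum_rpow_one_add_mul_le {p : ℕ → ℝ} (hp0 : ∀ n, 0 ≤ p n) {δ : ℝ} (hδ : 0 ≤ δ)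
    {s : Finset ℕ} {b : ℝ} (hb : ∀ n ∈ s, n ≤ b) :
    ∑ n ∈ s, (n : ℝ) ^ (1 + δ) * p n ≤ b ^ δ * ∑ n ∈ s, (n : ℝ) * p n := by
  rw [Finset.mul_sum]
  refine Finset.sum_le_sum fun n hn => ?_
  rw [rpow_add' n.cast_nonneg (by linarith), rpow_one, mul_comm _ ((n : ℝ) ^ δ), mul_assoc]
  gcongr
  · exact mul_nonneg n.cast_nonneg (hp0 n)
  · exact hb n hn

theorem mul_sum_le_tsum_mul_one_sub_pow {p : ℕ → ℝ} (hp0 : ∀ n, 0 ≤ p n) (hp : Summable p)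
    (hnp : Summable fun n : ℕ => (n : ℝ) * p n) {x : ℝ} (hx0 : 0 ≤ x) (hx1 : x ≤ 1)
    {s : Finset ℕ} (hs : ∀ n ∈ s, 2 ≤ n * x) :
    x / 2 * ∑ n ∈ s, (n : ℝ) * p n ≤
      ∑' n, p n * (1 - x) ^ n - ∑' n, p n + x * ∑' n : ℕ, (n : ℝ) * p n := by
  have hpz : Summable fun n => p n * (1 - x) ^ n :=
    hp.of_nonneg_of_le (fun n => mul_nonneg (hp0 n) (pow_nonneg (by linarith) n))
      fun n => mul_le_of_le_one_right (hp0 n) (pow_le_one₀ (by linarith) (by linarith))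
  have hg : HasSum (fun n => p n * ((1 - x) ^ n - 1 + n * x))
      (∑' n, p n * (1 - x) ^ n - ∑' n, p n + x * ∑' n : ℕ, (n : ℝ) * p n) :=
    ((hpz.hasSum.sub hp.hasSum).add (hnp.hasSum.mul_left x)).congr_fun fun n => by ring
  have bernoulli : ∀ n : ℕ, 1 - n * x ≤ (1 - x) ^ n := fun n => by
    simpa [sub_eq_add_neg] using one_add_mul_le_pow (a := -x) (by linarith) n
  calc x / 2 * ∑ n ∈ s, (n : ℝ) * p n = ∑ n ∈ s, p n * (n * x / 2) := by
        rw [Finset.mul_sum]; congr! 1; ring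
    _ ≤ ∑ n ∈ s, p n * ((1 - x) ^ n - 1 + n * x) := by
        refine Finset.sum_le_sum fun n hn => mul_le_mul_of_nonneg_left ?_ (hp0 n)
        nlinarith [hs n hn, pow_nonneg (sub_nonneg.mpr hx1) n]
    _ ≤ _ := sum_le_hasSum s (fun n _ => mul_nonneg (hp0 n) (by linarith [bernoulli n])) hg

theorem sum_dyadicBlock_succ_mul_le {p : ℕ → ℝ} (hp0 : ∀ n, 0 ≤ p n) (hp : Summable p)
    (hnp : Summable fun n : ℕ => (n : ℝ) * p n) {α : ℝ} {ℓ : ℝ → ℝ}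
    (hgen : ∀ z : ℝ, 0 ≤ z → z < 1 → ∑' n, p n * z ^ n =
      ∑' n, p n - (1 - z) * ∑' n : ℕ, (n : ℝ) * p n + (1 - z) ^ (1 + α) * ℓ (1 - z))
    (j : ℕ) :
    ∑ n ∈ dyadicBlock (j + 1), (n : ℝ) * p n ≤ 2 * ((2⁻¹ : ℝ) ^ j) ^ α * ℓ (2⁻¹ ^ j) := by
  set x : ℝ := 2⁻¹ ^ j
  have hx0 : 0 < x := by positivity
  have hx1 : x ≤ 1 := pow_le_one₀ (by norm_num) (by norm_num)
  have hs : ∀ n ∈ dyadicBlock (j + 1), 2 ≤ (n : ℝ) * x := fun n hn => by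
    calc (2 : ℝ) = 2 ^ (j + 1) * x := by simp only [x, pow_succ, inv_pow]; field_simp
      _ ≤ n * x := by gcongr; exact_mod_cast (mem_dyadicBlock.mp hn).1
  have h := mul_sum_le_tsum_mul_one_sub_pow hp0 hp hnp hx0.le hx1 hs
  rw [hgen (1 - x) (by linarith) (by linarith), sub_sub_cancel, rpow_add hx0, rpow_one] at h
  have : x / 2 * ∑ n ∈ dyadicBlock (j + 1), (n : ℝ) * p n ≤ x / 2 * (2 * x ^ α * ℓ x) := by
    linarith
  exact le_of_mul_le_mul_left this (by positivity)

theorem summable_pow_mul_comp_pow {ℓ : ℝ → ℝ} {c r : ℝ} (hc0 : 0 < c) (hc1 : c < 1)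
    (hr0 : 0 < r) (hr1 : r < 1) (hℓ : ∀ᶠ x in 𝓝[>] 0, ℓ x ≠ 0)
    (hsv : Tendsto (fun x => ℓ (c * x) / ℓ x) (𝓝[>] 0) (𝓝 1)) :
    Summable fun j : ℕ => r ^ j * ℓ (c ^ j) := by
  have hcj : Tendsto (fun j : ℕ => c ^ j) atTop (𝓝[>] 0) :=
    tendsto_nhdsWithin_of_tendsto_nhds_of_eventually_within _
      (tendsto_pow_atTop_nhds_zero_of_lt_one hc0.le hc1) (Eventually.of_forall (pow_pos hc0))
  refine summable_of_ratio_test_tendsto_lt_one hr1 ?_ ?_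
  · filter_upwards [hcj.eventually hℓ] with j hj using mul_ne_zero (pow_ne_zero j hr0.ne') hj
  · have := ((hsv.comp hcj).abs.const_mul r)
    rw [abs_one, mul_one] at this
    refine this.congr fun j => ?_
    simp only [Function.comp_apply, norm_mul, norm_pow, Real.norm_eq_abs, abs_div,
      abs_of_pos hr0, pow_succ]
    field_simp

theorem stmt_14_general (p : ℕ → ℝ) (hp0 : ∀ n, 0 ≤ p n)
    (hp_sum : Summable p) (hp_total : ∑' n, p n = 1)
    (m : ℝ) (hm_sum : Summable (fun n : ℕ => (n : ℝ) * p n))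
    (hm : m = ∑' n : ℕ, (n : ℝ) * p n)
    (α : ℝ)
    (ℓb : ℝ → ℝ) (hℓ_pos : ∀ x, 0 < x → x ≤ 1 → 0 < ℓb x)
    (hℓ_sv : ∀ c > 0, Tendsto (fun x => ℓb (c * x) / ℓb x) (nhdsWithin 0 (Ioi 0)) (nhds 1))
    (hgen : ∀ z : ℝ, 0 ≤ z → z < 1 →
      ∑' n, p n * z ^ n = 1 - (1 - z) * m + (1 - z) ^ (1 + α) * ℓb (1 - z)) :
    ∀ δ : ℝ, 0 < δ → δ < α → Summable (fun n : ℕ => (n : ℝ) ^ (1 + δ) * p n) := by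
  intro δ hδ0 hδα
  have hblock := sum_dyadicBlock_succ_mul_le hp0 hp_sum hm_sum fun z hz0 hz1 => by
    rw [hgen z hz0 hz1, hp_total, hm]
  have hℓ_ne : ∀ᶠ x in 𝓝[>] 0, ℓb x ≠ 0 := by
    filter_upwards [Ioc_mem_nhdsGT one_pos] with x hx using (hℓ_pos x hx.1 hx.2).ne'
  have hgeom := summable_pow_mul_comp_pow (by norm_num) (by norm_num) (by positivity)
    (rpow_lt_one_of_one_lt_of_neg one_lt_two (sub_neg.mpr hδα)) hℓ_ne
    (hℓ_sv 2⁻¹ (by norm_num))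
  refine summable_of_summable_sum_dyadicBlock (fun n => mul_nonneg (by positivity) (hp0 n))
    ((summable_nat_add_iff 1).mp ?_)
  refine (hgeom.mul_left (2 * 4 ^ δ)).of_nonneg_of_le
    (fun j => Finset.sum_nonneg fun n _ => mul_nonneg (by positivity) (hp0 n)) fun j => ?_
  calc ∑ n ∈ dyadicBlock (j + 1), (n : ℝ) ^ (1 + δ) * p n
      ≤ ((2 : ℝ) ^ (j + 2)) ^ δ * ∑ n ∈ dyadicBlock (j + 1), (n : ℝ) * p n :=
        sum_rpow_one_add_mul_le hp0 hδ0.le fun n hn => by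
          exact_mod_cast (mem_dyadicBlock.mp hn).2.le
    _ ≤ ((2 : ℝ) ^ (j + 2)) ^ δ * (2 * ((2⁻¹ : ℝ) ^ j) ^ α * ℓb (2⁻¹ ^ j)) := by
        gcongr; exact hblock j
    _ = 2 * 4 ^ δ * (((2 : ℝ) ^ (δ - α)) ^ j * ℓb (2⁻¹ ^ j)) := by
        rw [← rpow_pow_comm zero_le_two, ← rpow_pow_comm (by norm_num), inv_rpow zero_le_two,
          rpow_sub two_pos, pow_add, rpow_pow_comm zero_le_two δ 2,
          show ((2 : ℝ) ^ 2) = 4 by norm_num, div_eq_mul_inv, mul_pow]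
        ring

/-- If an offspring distribution `(p_n)` with finite mean `m` has generating
function of Slack's form `∑ p_n z^n = 1 − (1−z)m + (1−z)^{1+α} ℓ̄(1−z)`, with
`ℓ̄` slowly varying at `0`, then `∑ n^{1+δ} p_n < ∞` for every `δ ∈ (0,α)`. -/
theorem stmt_14 (p : ℕ → ℝ) (hp0 : ∀ n, 0 ≤ p n)
    (hp_sum : Summable p) (hp_total : ∑' n, p n = 1)
    (m : ℝ) (hm_sum : Summable (fun n : ℕ => (n : ℝ) * p n))
    (hm : m = ∑' n : ℕ, (n : ℝ) * p n)
    (α : ℝ) (hα0 : 0 < α) (hα1 : α ≤ 1)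
    (ℓb : ℝ → ℝ) (hℓ_pos : ∀ x, 0 < x → x ≤ 1 → 0 < ℓb x) (hℓ_meas : Measurable ℓb)
    (hℓ_sv : ∀ c > 0, Tendsto (fun x => ℓb (c * x) / ℓb x) (nhdsWithin 0 (Ioi 0)) (nhds 1))
    (hgen : ∀ z : ℝ, 0 ≤ z → z < 1 →
      ∑' n, p n * z ^ n = 1 - (1 - z) * m + (1 - z) ^ (1 + α) * ℓb (1 - z)) :
    ∀ δ : ℝ, 0 < δ → δ < α → Summable (fun n : ℕ => (n : ℝ) ^ (1 + δ) * p n) :=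
  stmt_14_general p hp0 hp_sum hp_total m hm_sum hm α ℓb hℓ_pos hℓ_sv hgen
end
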